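/- arXiv:2508.05475 — 3 statements merged into one kernel-verified Lean document; each statement's English description precedes it below -/
import Mathlib

section
/- Let V be a finite collection of measurable sets, W a finite collection of measurable sets, and suppose V is partitioned as V = ⊔_{W ∈ W} V_W where each V_W consists of sets contained in W, and suppose there is a constant D > 0 such that ∑_{V' ∈ V_W} |V'| ≥ D·|W| for every W ∈ W. Then for any measurable set U of positive finite measure, Δ(W, U) ≤ Δ(V, U)/D, where Δ(X, U) = (∑_{X' ∈ X, X' ⊆ U} |X'|)/|U|. -/
open MeasureTheory Finset
open scoped ENNReal Classical

/-- The density `Δ(V, K)` of a finite collection of sets in a set `K`. -/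
noncomputable def density {Ω : Type*} [MeasurableSpace Ω] (μ : Measure Ω)
    (V : Finset (Set Ω)) (K : Set Ω) : ℝ≥0∞ :=
  (∑ W ∈ V.filter (fun W => W ⊆ K), μ W) / μ K

/-- If `V` is partitioned into pieces `part W` for `W ∈ 𝕎`, each consisting of subsets of `W`
with total measure at least `D·|W|`, then `Δ(𝕎, U) ≤ Δ(V, U)/D` for every `U`. -/
theorem density_container_le {Ω : Type*} [MeasurableSpace Ω] (μ : Measure Ω)
    (V 𝕎 : Finset (Set Ω)) (part : Set Ω → Finset (Set Ω)) (D : ℝ≥0∞)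
    (hD : 0 < D)
    (hmeas : ∀ V' ∈ V, MeasurableSet V')
    (hfin : ∀ V' ∈ V, 0 < μ V' ∧ μ V' < ⊤)
    (hWfin : ∀ W ∈ 𝕎, 0 < μ W ∧ μ W < ⊤)
    (hpart : V = 𝕎.biUnion part)
    (hdisj : (↑𝕎 : Set (Set Ω)).PairwiseDisjoint part)
    (hsub : ∀ W ∈ 𝕎, ∀ V' ∈ part W, V' ⊆ W)
    (hdens : ∀ W ∈ 𝕎, D * μ W ≤ ∑ V' ∈ part W, μ V')
    (U : Set Ω) (hU : MeasurableSet U) (hUpos : 0 < μ U) (hUfin : μ U < ⊤) :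
    density μ 𝕎 U ≤ density μ V U / D := by
  set F := 𝕎.filter (fun W => W ⊆ U) with hF
  have hsubV : F.biUnion part ⊆ V.filter (fun V' => V' ⊆ U) := by
    intro V' hV'
    rcases Finset.mem_biUnion.1 hV' with ⟨W, hW, hV'W⟩
    have hW𝕎 : W ∈ 𝕎 := Finset.mem_of_mem_filter _ hW
    have hWU : W ⊆ U := (Finset.mem_filter.1 hW).2
    exact Finset.mem_filter.2 ⟨hpart ▸ Finset.mem_biUnion.2 ⟨W, hW𝕎, hV'W⟩,
      (hsub W hW𝕎 V' hV'W).trans hWU⟩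
  have key : D * ∑ W ∈ F, μ W ≤ ∑ V' ∈ V.filter (fun V' => V' ⊆ U), μ V' := by
    rw [Finset.mul_sum]
    calc ∑ W ∈ F, D * μ W ≤ ∑ W ∈ F, ∑ V' ∈ part W, μ V' :=
          Finset.sum_le_sum fun W hW => hdens W (Finset.mem_of_mem_filter _ hW)
      _ = ∑ V' ∈ F.biUnion part, μ V' :=
          (Finset.sum_biUnion (hdisj.subset (by intro x hx; exact (Finset.mem_filter.1 hx).1))).symm
      _ ≤ _ := Finset.sum_le_sum_of_subset hsubV
  have hSVfin : (∑ V' ∈ V.filter (fun V' => V' ⊆ U), μ V') ≠ ⊤ := by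
    exact (ENNReal.sum_lt_top.2 fun V' hV' =>
      (hfin V' (Finset.mem_of_mem_filter _ hV')).2).ne
  unfold density
  rw [ENNReal.le_div_iff_mul_le (Or.inl hD.ne')
    (Or.inr (by simp [ENNReal.div_eq_top, hSVfin, hUpos.ne'])), div_eq_mul_inv, mul_right_comm,
    ← div_eq_mul_inv]
  exact ENNReal.div_le_div_right (by rwa [mul_comm] at key) _
end

section
/- (Factoring bound on Δ_max of the container family) Let V be a finite collection of measurable sets of positive finite measure, W a finite collection of measurable sets, and suppose V = ⊔_{W ∈ W} V_uni[W] with V_uni[W] ⊆ V[W] and Δ(V_uni[W], W) ≥ c·Δ_max(V) for all W ∈ W, where c ∈ (0,1] and Δ_max(V) > 0. Then Δ_max(W) ≤ 1/c. -/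
open MeasureTheory Finset
open scoped ENNReal Classical

/-- The maximal density `Δ_max(V)`. -/
noncomputable def densityMax {Ω : Type*} [MeasurableSpace Ω] (μ : Measure Ω)
    (V : Finset (Set Ω)) : ℝ≥0∞ :=
  ⨆ (K : Set Ω) (_ : MeasurableSet K ∧ 0 < μ K ∧ μ K < ⊤), density μ V K

/-- If `V = ⊔_{W ∈ 𝕎} V_uni[W]` with `V_uni[W] ⊆ V[W]` and
`Δ(V_uni[W], W) ≥ c·Δ_max(V)` for all `W ∈ 𝕎`, then `Δ_max(𝕎) ≤ 1/c`. -/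
theorem densityMax_containers_le {Ω : Type*} [MeasurableSpace Ω] (μ : Measure Ω)
    (V 𝕎 : Finset (Set Ω)) (Vuni : Set Ω → Finset (Set Ω)) (c : ℝ≥0∞)
    (hc0 : 0 < c) (hc1 : c ≤ 1)
    (hfin : ∀ V' ∈ V, 0 < μ V' ∧ μ V' < ⊤)
    (hWfin : ∀ W ∈ 𝕎, 0 < μ W ∧ μ W < ⊤)
    (hDpos : 0 < densityMax μ V) (hDfin : densityMax μ V < ⊤)
    (hpart : V = 𝕎.biUnion Vuni)
    (hdisj : (↑𝕎 : Set (Set Ω)).PairwiseDisjoint Vuni)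
    (hsub : ∀ W ∈ 𝕎, Vuni W ⊆ V.filter (fun V' => V' ⊆ W))
    (hlow : ∀ W ∈ 𝕎, c * densityMax μ V ≤ density μ (Vuni W) W) :
    densityMax μ 𝕎 ≤ 1 / c := by
  have hcT : c ≠ ⊤ := (lt_of_le_of_lt hc1 ENNReal.one_lt_top).ne
  set D := densityMax μ V with hD
  refine iSup_le fun U => iSup_le fun hU => ?_
  obtain ⟨hUm, hU0, hUt⟩ := hU
  -- density of V in U is at most D
  have hVU : density μ V U ≤ D := le_iSup_of_le U (le_iSup_of_le ⟨hUm, hU0, hUt⟩ le_rfl)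
  have hsum1 : ∑ V' ∈ V.filter (fun V' => V' ⊆ U), μ V' ≤ D * μ U := by
    have := (ENNReal.div_le_iff_le_mul (Or.inl hU0.ne') (Or.inl hUt.ne)).mp hVU
    simpa [density] using this
  set F := 𝕎.filter (fun W => W ⊆ U) with hF
  -- each W in F satisfies μ W * (c*D) ≤ sum over Vuni W
  have hW : ∀ W ∈ F, μ W * (c * D) ≤ ∑ V' ∈ Vuni W, μ V' := by
    intro W hWF
    have hWmem : W ∈ 𝕎 := (Finset.mem_filter.mp hWF).1
    obtain ⟨hW0, hWt⟩ := hWfin W hWmem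
    have h := hlow W hWmem
    have h2 : c * D * μ W ≤ ∑ V' ∈ (Vuni W).filter (fun V' => V' ⊆ W), μ V' := by
      have := (ENNReal.le_div_iff_mul_le (Or.inl hW0.ne') (Or.inl hWt.ne)).mp h
      simpa [density] using this
    calc μ W * (c * D) = c * D * μ W := by ring
      _ ≤ ∑ V' ∈ (Vuni W).filter (fun V' => V' ⊆ W), μ V' := h2
      _ ≤ ∑ V' ∈ Vuni W, μ V' := Finset.sum_le_sum_of_subset (Finset.filter_subset _ _)
  -- sum over F
  have hbiU : F.biUnion Vuni ⊆ V.filter (fun V' => V' ⊆ U) := by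
    intro V' hV'
    obtain ⟨W, hWF, hV'W⟩ := Finset.mem_biUnion.mp hV'
    obtain ⟨hWmem, hWU⟩ := Finset.mem_filter.mp hWF
    have := hsub W hWmem hV'W
    obtain ⟨hV'V, hV'W'⟩ := Finset.mem_filter.mp this
    exact Finset.mem_filter.mpr ⟨hV'V, hV'W'.trans hWU⟩
  have hdisjF : (↑F : Set (Set Ω)).PairwiseDisjoint Vuni :=
    hdisj.subset (by intro x hx; simp only [hF, Finset.coe_filter, Set.mem_setOf_eq] at hx; exact hx.1)
  have hchain : (∑ W ∈ F, μ W) * (c * D) ≤ D * μ U := by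
    calc (∑ W ∈ F, μ W) * (c * D) = ∑ W ∈ F, μ W * (c * D) := by rw [Finset.sum_mul]
      _ ≤ ∑ W ∈ F, ∑ V' ∈ Vuni W, μ V' := Finset.sum_le_sum hW
      _ = ∑ V' ∈ F.biUnion Vuni, μ V' := (Finset.sum_biUnion hdisjF).symm
      _ ≤ ∑ V' ∈ V.filter (fun V' => V' ⊆ U), μ V' := Finset.sum_le_sum_of_subset hbiU
      _ ≤ D * μ U := hsum1
  have hcD0 : c * D ≠ 0 := by
    simp [hc0.ne', hDpos.ne']
  have hcDT : c * D ≠ ⊤ := ENNReal.mul_ne_top hcT hDfin.ne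
  have hsumF : ∑ W ∈ F, μ W ≤ μ U / c := by
    have h := (ENNReal.le_div_iff_mul_le (Or.inl hcD0) (Or.inl hcDT)).mpr hchain
    have heq : D * μ U / (c * D) = μ U / c := by
      rw [mul_comm c D, ENNReal.mul_div_mul_left _ _ hDpos.ne' hDfin.ne]
    rwa [heq] at h
  -- conclude
  have : density μ 𝕎 U ≤ (μ U / c) / μ U := by
    unfold density
    exact ENNReal.div_le_div_right hsumF _
  refine this.trans ?_
  rw [ENNReal.div_le_iff_le_mul (Or.inl hU0.ne') (Or.inl hUt.ne)]
  simp [div_eq_mul_inv, mul_comm]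
end

section
/- Suppose T is a finite collection of sets of equal measure v > 0 with Δ_max(T) = D ≥ 1, and suppose T' ⊆ T is a subcollection such that for every measurable K, |T'[K]| ≤ (C/D)·|T[K]| + C for some constant C ≥ 1 (a typical property of a random subset of density 1/D). Then Δ_max(T') ≤ C·(1 + D·v/m) where m is the minimum measure of candidate sets K with T'[K] nonempty. -/
open MeasureTheory Finset
open scoped ENNReal Classical

/-!
Dividing `|T'[K]| ≤ (C/D)|T[K]| + C` by `|K|/v` gives `Δ(T', K) ≤ (C/D) Δ(T, K) + C v/|K|`.
The first term is at most `C` because `Δ(T, K) ≤ D`, and the second at most `C D v/m`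
because `|K| ≥ m` and `D ≥ 1`.
-/

namespace ENNReal

theorem mul_div_le_add_of_le_div_mul_add {v x y k C D : ℝ≥0∞}
    (hy : y ≤ C / D * x + C) (hx : v * x / k ≤ D) :
    v * y / k ≤ C + C * v / k :=
  calc v * y / k ≤ v * (C / D * x + C) / k := by gcongr
    _ = C / D * (v * x / k) + C * v / k := by simp only [div_eq_mul_inv]; ring
    _ ≤ C / D * D + C * v / k := by gcongr
    _ ≤ C + C * v / k := by
        gcongr
        rw [mul_comm]
        exact ENNReal.mul_div_le

theorem add_mul_div_le_mul_one_add {C D v k m : ℝ≥0∞} (hD : 1 ≤ D) (hm : m ≤ k) :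
    C + C * v / k ≤ C * (1 + D * v / m) :=
  calc C + C * v / k ≤ C + C * (D * v) / m := by
        gcongr
        exact le_mul_of_one_le_left zero_le hD
    _ = C * (1 + D * v / m) := by rw [mul_add, mul_one, mul_div_assoc]

end ENNReal

theorem random_subfamily_katz_tao_general {Ω ι : Type*} [MeasurableSpace Ω] (μ : Measure Ω)
    (Tset : ι → Set Ω) (T T' : Finset ι)
    (v D C m : ℝ≥0∞)
    (hD1 : 1 ≤ D) (hm : 0 < m)
    (hDmax : ∀ K : Set Ω, 0 < μ K → μ K < ⊤ →
      v * ((T.filter fun i => Tset i ⊆ K).card : ℝ≥0∞) / μ K ≤ D)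
    (hrand : ∀ K : Set Ω,
      ((T'.filter fun i => Tset i ⊆ K).card : ℝ≥0∞) ≤
        (C / D) * ((T.filter fun i => Tset i ⊆ K).card : ℝ≥0∞) + C) :
    ∀ K : Set Ω, m ≤ μ K → μ K < ⊤ →
      v * ((T'.filter fun i => Tset i ⊆ K).card : ℝ≥0∞) / μ K ≤ C * (1 + D * v / m) := by
  intro K hmK hKfin
  have hDK := hDmax K (hm.trans_le hmK) hKfin
  exact (ENNReal.mul_div_le_add_of_le_div_mul_add (hrand K) hDK).trans
    (ENNReal.add_mul_div_le_mul_one_add hD1 hmK)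

/-- Random sparsification: if every set of `T` has measure `v`, `Δ_max(T) ≤ D`, and the
subfamily `T'` satisfies `|T'[K]| ≤ (C/D)|T[K]| + C` for every `K`, then for every
candidate `K` of measure at least `m` one has `Δ(T', K) ≤ C·(1 + D·v/m)`. -/
theorem random_subfamily_katz_tao {Ω ι : Type*} [MeasurableSpace Ω] (μ : Measure Ω)
    (Tset : ι → Set Ω) (T T' : Finset ι) (hsub : T' ⊆ T)
    (v D C m : ℝ≥0∞)
    (hv : 0 < v) (hvfin : v < ⊤)
    (hvol : ∀ i ∈ T, μ (Tset i) = v)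
    (hD1 : 1 ≤ D) (hDfin : D < ⊤) (hC : 1 ≤ C) (hm : 0 < m)
    (hDmax : ∀ K : Set Ω, 0 < μ K → μ K < ⊤ →
      v * ((T.filter fun i => Tset i ⊆ K).card : ℝ≥0∞) / μ K ≤ D)
    (hrand : ∀ K : Set Ω,
      ((T'.filter fun i => Tset i ⊆ K).card : ℝ≥0∞) ≤
        (C / D) * ((T.filter fun i => Tset i ⊆ K).card : ℝ≥0∞) + C) :
    ∀ K : Set Ω, m ≤ μ K → μ K < ⊤ →
      v * ((T'.filter fun i => Tset i ⊆ K).card : ℝ≥0∞) / μ K ≤ C * (1 + D * v / m) :=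
  random_subfamily_katz_tao_general μ Tset T T' v D C m hD1 hm hDmax hrand
end
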